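/- arXiv:1909.04593 — 2 statements merged into one kernel-verified Lean document; each statement's English description precedes it below -/
import Mathlib

section
/- For every real r ≥ 0 and every t ∈ [−π, π], (t/π)² + (1−r)² ≤ 2 · ((cos t − r)² + sin² t); equivalently, |1 − r + i·t/π| / |e^{i(ϑ+t)} − r·e^{iϑ}| ≤ √2 for all ϑ ∈ ℝ whenever the denominator is nonzero. -/
/-! Since `|e^{iϑ}| = 1`, the denominator is `|e^{it} − r|`, whose square is
`(1 − r)² + 4r sin²(t/2)`. Jordan's inequality gives `sin²(t/2) ≥ (t/π)² =: s`, and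
with `0 ≤ s ≤ 1` the claim `s + (1 − r)² ≤ 2((1 − r)² + 4rs)` is linear in `s`, so it
suffices to check `s = 0` and `s = 1`. -/

open Real Complex

lemma sq_div_pi_le_sin_half_sq {t : ℝ} (ht : |t| ≤ π) :
    (t / π) ^ 2 ≤ Real.sin (t / 2) ^ 2 := by
  have hjordan := Real.mul_abs_le_abs_sin (x := t / 2) (by rw [abs_div, abs_two]; linarith)
  refine sq_le_sq.2 (le_trans (le_of_eq ?_) hjordan)
  rw [abs_div, abs_div, abs_two, abs_of_pos pi_pos]
  ring

lemma cos_sub_sq_add_sin_sq (r t : ℝ) :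
    (Real.cos t - r) ^ 2 + Real.sin t ^ 2 = (1 - r) ^ 2 + 4 * r * Real.sin (t / 2) ^ 2 := by
  have hcos := Real.cos_two_mul (t / 2)
  rw [show 2 * (t / 2) = t by ring] at hcos
  linear_combination
    (-2 * r) * hcos + Real.sin_sq_add_cos_sq t - 4 * r * Real.sin_sq_add_cos_sq (t / 2)

lemma add_one_sub_sq_le_two_mul {r s u : ℝ} (hr : 0 ≤ r) (hs : 0 ≤ s) (hs1 : s ≤ 1)
    (hsu : s ≤ u) :
    s + (1 - r) ^ 2 ≤ 2 * ((1 - r) ^ 2 + 4 * r * u) := by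
  nlinarith [mul_nonneg (sub_nonneg.2 hs1) (sq_nonneg (1 - r)),
    mul_nonneg hs (by positivity : 0 ≤ r ^ 2 + 6 * r), mul_le_mul_of_nonneg_left hsu hr]

lemma sq_norm_exp_mul_I_sub_ofReal (r t : ℝ) :
    ‖exp (t * I) - r‖ ^ 2 = (Real.cos t - r) ^ 2 + Real.sin t ^ 2 := by
  rw [Complex.sq_norm, normSq_apply]
  simp only [sub_re, sub_im, exp_ofReal_mul_I_re, exp_ofReal_mul_I_im, ofReal_re, ofReal_im]
  ring

lemma norm_exp_add_mul_I_sub_mul_exp (r ϑ t : ℝ) :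
    ‖exp ((ϑ + t : ℝ) * I) - r * exp (ϑ * I)‖ = ‖exp (t * I) - r‖ := by
  rw [ofReal_add, add_mul, Complex.exp_add, mul_comm (r : ℂ), ← mul_sub, norm_mul,
    norm_exp_ofReal_mul_I, one_mul]

lemma sq_norm_one_sub_ofReal_add_I_mul (r b : ℝ) :
    ‖1 - (r : ℂ) + I * b‖ ^ 2 = b ^ 2 + (1 - r) ^ 2 := by
  have h : 1 - (r : ℂ) + I * b = ((1 - r : ℝ) : ℂ) + b * I := by push_cast; ring
  rw [h, Complex.sq_norm, normSq_add_mul_I, add_comm]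

lemma div_le_sqrt_of_sq_le_mul_sq {a b c : ℝ} (ha : 0 ≤ a) (hb : 0 ≤ b) (hc : 0 ≤ c)
    (h : a ^ 2 ≤ c * b ^ 2) : a / b ≤ √c := by
  rw [Real.le_sqrt (by positivity) hc, div_pow]
  exact div_le_of_le_mul₀ (by positivity) hc h

/-- **Uniform ratio estimate near the contour crossing.** For every real
`r ≥ 0` and every `t ∈ [−π, π]`,
`(t/π)² + (1−r)² ≤ 2·((cos t − r)² + sin² t)`; equivalently,
`|1 − r + i·t/π| / |e^{i(ϑ+t)} − r·e^{iϑ}| ≤ √2` for all `ϑ ∈ ℝ` whenever the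
denominator is nonzero. -/
theorem ratio_estimate (r : ℝ) (hr : 0 ≤ r) (t : ℝ) (ht : t ∈ Set.Icc (-π) π) :
    ((t / π) ^ 2 + (1 - r) ^ 2 ≤ 2 * ((Real.cos t - r) ^ 2 + Real.sin t ^ 2)) ∧
    (∀ ϑ : ℝ,
      Complex.exp ((ϑ + t : ℝ) * Complex.I) - (r : ℂ) * Complex.exp ((ϑ : ℝ) * Complex.I) ≠ 0 →
      ‖(1 : ℂ) - (r : ℂ) + Complex.I * ((t / π : ℝ) : ℂ)‖ /
        ‖Complex.exp ((ϑ + t : ℝ) * Complex.I) - (r : ℂ) * Complex.exp ((ϑ : ℝ) * Complex.I)‖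
        ≤ Real.sqrt 2) := by
  have hjordan := sq_div_pi_le_sin_half_sq (abs_le.2 ht)
  have key : (t / π) ^ 2 + (1 - r) ^ 2 ≤ 2 * ((Real.cos t - r) ^ 2 + Real.sin t ^ 2) := by
    rw [cos_sub_sq_add_sin_sq]
    exact add_one_sub_sq_le_two_mul hr (sq_nonneg _) (hjordan.trans (Real.sin_sq_le_one _))
      hjordan
  refine ⟨key, fun ϑ _ =>
    div_le_sqrt_of_sq_le_mul_sq (norm_nonneg _) (norm_nonneg _) zero_le_two ?_⟩
  rwa [norm_exp_add_mul_I_sub_mul_exp, sq_norm_exp_mul_I_sub_ofReal,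
    sq_norm_one_sub_ofReal_add_I_mul]
end

section
/- For every a ∈ (0, 1] and every real u with −1/2 < u < (1−a)/(1+a), ln(1+u) ≤ u − ((1+a)/4)·u². -/
open Real Set

/-!
With `f(t) = t - (b/2) t² - log (1 + t)` one has `f 0 = 0` and
`f'(t) = t (1 - b (1 + t)) / (1 + t)`. As long as `b (1 + s) ≤ 1` between `0` and `u`,
the derivative has the sign of `t`, so `f` decreases towards `0` and increases after it,
whence `f u ≥ 0`. The stated inequality is the case `b = (1 + a) / 2`.
-/

theorem hasDerivAt_sub_sq_sub_log_one_add (b : ℝ) {t : ℝ} (ht : -1 < t) :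
    HasDerivAt (fun s ↦ s - b / 2 * s ^ 2 - log (1 + s)) (t * (1 - b * (1 + t)) / (1 + t)) t := by
  have ht' : 1 + t ≠ 0 := by linarith
  have hlog : HasDerivAt (fun s ↦ log (1 + s)) (1 / (1 + t)) t := by
    simpa using ((hasDerivAt_id t).const_add 1).log ht'
  refine (((hasDerivAt_id' t).fun_sub ((hasDerivAt_pow 2 t).const_mul (b / 2))).fun_sub
    hlog).congr_deriv ?_
  field_simp
  ring

theorem log_one_add_le_sub_sq_of_nonneg {b u : ℝ} (hu : 0 ≤ u) (hbu : b * (1 + u) ≤ 1) :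
    log (1 + u) ≤ u - b / 2 * u ^ 2 := by
  set f : ℝ → ℝ := fun s ↦ s - b / 2 * s ^ 2 - log (1 + s)
  have hf : ∀ t ∈ Icc 0 u, HasDerivAt f (t * (1 - b * (1 + t)) / (1 + t)) t :=
    fun t ht ↦ hasDerivAt_sub_sq_sub_log_one_add b (by linarith [ht.1])
  have hmono : MonotoneOn f (Icc 0 u) := by
    refine monotoneOn_of_hasDerivWithinAt_nonneg (convex_Icc 0 u)
      (fun t ht ↦ (hf t ht).continuousAt.continuousWithinAt)
      (fun t ht ↦ (hf t (interior_subset ht)).hasDerivWithinAt) ?_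
    intro t ht
    rw [interior_Icc] at ht
    have hbt : b * (1 + t) ≤ 1 := by nlinarith [ht.1, ht.2]
    have : 0 ≤ t * (1 - b * (1 + t)) := mul_nonneg ht.1.le (by linarith)
    exact div_nonneg this (by linarith [ht.1])
  have := hmono ⟨le_rfl, hu⟩ ⟨hu, le_rfl⟩ hu
  simp only [f] at this
  norm_num at this
  linarith

theorem log_one_add_le_sub_sq_of_nonpos {b u : ℝ} (hb : b ≤ 1) (hu₁ : -1 < u) (hu : u ≤ 0) :
    log (1 + u) ≤ u - b / 2 * u ^ 2 := by
  set f : ℝ → ℝ := fun s ↦ s - b / 2 * s ^ 2 - log (1 + s)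
  have hf : ∀ t ∈ Icc u 0, HasDerivAt f (t * (1 - b * (1 + t)) / (1 + t)) t :=
    fun t ht ↦ hasDerivAt_sub_sq_sub_log_one_add b (by linarith [ht.1])
  have hanti : AntitoneOn f (Icc u 0) := by
    refine antitoneOn_of_hasDerivWithinAt_nonpos (convex_Icc u 0)
      (fun t ht ↦ (hf t ht).continuousAt.continuousWithinAt)
      (fun t ht ↦ (hf t (interior_subset ht)).hasDerivWithinAt) ?_
    intro t ht
    rw [interior_Icc] at ht
    have hbt : b * (1 + t) ≤ 1 := by nlinarith [ht.1, ht.2]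
    have : t * (1 - b * (1 + t)) ≤ 0 := mul_nonpos_of_nonpos_of_nonneg ht.2.le (by linarith)
    exact div_nonpos_of_nonpos_of_nonneg this (by linarith [ht.1])
  have := hanti ⟨le_rfl, hu⟩ ⟨hu, le_rfl⟩ hu
  simp only [f] at this
  norm_num at this
  linarith

theorem log_one_add_le_sub_sq {b u : ℝ} (hb : b ≤ 1) (hu₁ : -1 < u) (hbu : b * (1 + u) ≤ 1) :
    log (1 + u) ≤ u - b / 2 * u ^ 2 := by
  rcases le_total 0 u with hu | hu
  · exact log_one_add_le_sub_sq_of_nonneg hu hbu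
  · exact log_one_add_le_sub_sq_of_nonpos hb hu₁ hu

/-- **Elementary logarithm inequality.** For every `a ∈ (0,1]` and every real
`u` with `−1/2 < u < (1−a)/(1+a)`, `ln(1+u) ≤ u − ((1+a)/4)·u²`. -/
theorem log_le_sub_quadratic (a : ℝ) (ha₀ : 0 < a) (ha₁ : a ≤ 1)
    (u : ℝ) (hu₁ : -(1/2) < u) (hu₂ : u < (1 - a) / (1 + a)) :
    Real.log (1 + u) ≤ u - (1 + a) / 4 * u ^ 2 := by
  have hbu : (1 + a) / 2 * (1 + u) ≤ 1 := by
    have := (lt_div_iff₀ (by linarith : (0 : ℝ) < 1 + a)).mp hu₂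
    nlinarith
  have := log_one_add_le_sub_sq (by linarith : (1 + a) / 2 ≤ 1) (by linarith) hbu
  convert this using 2
  ring
end
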